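/- arXiv:1412.1563 — 3 statements merged into one kernel-verified Lean document; each statement's English description precedes it below -/
import Mathlib

section
/- For every n ≥ 2 the set Q_n = {t > 0 : S_i(t) ≠ 0 for all 1 ≤ i < n, and S_n(t) = 0} is nonempty and has a greatest element b_n; the sequence (b_n)_{n≥2} is strictly increasing; and for every t > b_n one has S_i(t) > 0 for all 1 ≤ i ≤ n, and the function t ↦ S_n(t) is strictly increasing and continuous on the interval (b_n, ∞). -/
open Finset Set

/-- `XS t n = (x_n(t), S_n(t))`, defined recursively by `x_1(t) = t`, `S_1(t) = t`,
`x_{n+1}(t) = x_n(t) - 1/S_n(t)` and `S_{n+1}(t) = S_n(t) + x_{n+1}(t)`.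
(When some `S_i(t) = 0` the junk convention `1/0 = 0` of real division applies, but the
statements below only concern parameters `t` for which the relevant `S_i(t) ≠ 0`.) -/
noncomputable def XS (t : ℝ) : ℕ → ℝ × ℝ
  | 0 => (0, 0)
  | 1 => (t, t)
  | (n + 2) =>
      ((XS t (n + 1)).1 - 1 / (XS t (n + 1)).2,
        (XS t (n + 1)).2 + ((XS t (n + 1)).1 - 1 / (XS t (n + 1)).2))

/-- `x_n(t)`, the `n`-th term of the recursion started at `x_1(t) = t`. -/
noncomputable def xf (n : ℕ) (t : ℝ) : ℝ := (XS t n).1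

/-- `S_n(t) = x_1(t) + ... + x_n(t)`, the `n`-th partial sum of the recursion started at
`x_1(t) = t`. -/
noncomputable def Sf (n : ℕ) (t : ℝ) : ℝ := (XS t n).2

/-- `R_n = {t > 0 : S_i(t) ≠ 0 for 1 ≤ i < n, and x_n(t) = 0}`. -/
def Rset (n : ℕ) : Set ℝ :=
  {t | 0 < t ∧ (∀ i, 1 ≤ i → i < n → Sf i t ≠ 0) ∧ xf n t = 0}

/-- `Q_n = {t > 0 : S_i(t) ≠ 0 for 1 ≤ i < n, and S_n(t) = 0}`. -/
def Qset (n : ℕ) : Set ℝ :=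
  {t | 0 < t ∧ (∀ i, 1 ≤ i → i < n → Sf i t ≠ 0) ∧ Sf n t = 0}


/-!
Induction on `n`, starting from `b_1 = 0`. Suppose `S_n(b_n) = 0`, all `S_i` are positive
on `(b_n, ∞)`, and `x_n`, `S_n` are increasing and continuous there. Then on `(b_n, ∞)` the
functions `x_{n+1} = x_n - 1/S_n` and `S_{n+1} = S_n + x_{n+1}` are increasing and continuous
as well; `S_{n+1} → -∞` as `t → b_n⁺` because `S_n → 0⁺`, while `S_{n+1}(t) ≥ 1` for large `t`.
So `S_{n+1}` has exactly one zero `b_{n+1} > b_n` there, and it is positive beyond it.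
-/

open Filter Topology

lemma xf_one (t : ℝ) : xf 1 t = t := rfl

lemma Sf_one (t : ℝ) : Sf 1 t = t := rfl

lemma xf_add_two (n : ℕ) (t : ℝ) : xf (n + 2) t = xf (n + 1) t - 1 / Sf (n + 1) t := rfl

lemma Sf_add_two (n : ℕ) (t : ℝ) : Sf (n + 2) t = Sf (n + 1) t + xf (n + 2) t := rfl

/-- Each `1 / S_i(t)` is at most `1`, so `x_i(t)` loses at most `1` per step. -/
lemma sub_le_xf_and_one_le_Sf (n : ℕ) {t : ℝ} (ht : (n : ℝ) + 1 ≤ t) :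
    t - n ≤ xf (n + 1) t ∧ 1 ≤ Sf (n + 1) t := by
  induction n with
  | zero => simp_all [xf_one, Sf_one]
  | succ n ih =>
    push_cast at ht
    obtain ⟨hx, hS⟩ := ih (by linarith)
    have hinv : 1 / Sf (n + 1) t ≤ 1 := (div_le_one (by linarith)).2 hS
    have hx' : t - (n + 1 : ℕ) ≤ xf (n + 2) t := by rw [xf_add_two]; push_cast; linarith
    exact ⟨hx', by rw [Sf_add_two]; push_cast at hx'; linarith⟩

lemma StrictMonoOn.sub_one_div {α : Type*} [Preorder α] {f g : α → ℝ} {s : Set α}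
    (hf : StrictMonoOn f s) (hg : MonotoneOn g s) (hg₀ : ∀ x ∈ s, 0 < g x) :
    StrictMonoOn (fun x => f x - 1 / g x) s := fun a ha c hc hac => by
  have := one_div_le_one_div_of_le (hg₀ a ha) (hg ha hc hac.le)
  have := hf ha hc hac
  dsimp only
  linarith

lemma Filter.Tendsto.sub_one_div_atBot {α : Type*} {l : Filter α} {f g : α → ℝ} {c : ℝ}
    (hf : Tendsto f l (𝓝 c)) (hg : Tendsto g l (𝓝[>] 0)) :
    Tendsto (fun x => f x - 1 / g x) l atBot := by
  simpa only [sub_eq_add_neg, one_div, Function.comp_def] using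
    hf.add_atBot (tendsto_neg_atTop_atBot.comp (tendsto_inv_nhdsGT_zero.comp hg))

lemma exists_mem_Ioo_eq_zero_of_tendsto_atBot {f : ℝ → ℝ} {b c : ℝ}
    (hf : ContinuousOn f (Ioi b)) (hlim : Tendsto f (𝓝[>] b) atBot) (hbc : b < c)
    (hc : 0 < f c) : ∃ z ∈ Ioo b c, f z = 0 := by
  obtain ⟨a, hfa, hab, hac⟩ :=
    ((hlim.eventually (eventually_lt_atBot 0)).and (Ioo_mem_nhdsGT hbc)).exists
  obtain ⟨z, hz, hfz⟩ := intermediate_value_Ioo hac.le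
    (hf.mono fun t ht => hab.trans_le ht.1) ⟨hfa, hc⟩
  exact ⟨z, ⟨hab.trans hz.1, hz.2⟩, hfz⟩

/-- For `n ≥ 2` the unique such `b` is `b_n`; for `n = 1` it is `0`, which is not in `Q_1`. -/
structure IsLastZero (n : ℕ) (b : ℝ) : Prop where
  Sf_ne_zero : ∀ i, 1 ≤ i → i < n → Sf i b ≠ 0
  Sf_eq_zero : Sf n b = 0
  Sf_pos : ∀ t, b < t → ∀ i, 1 ≤ i → i ≤ n → 0 < Sf i t
  xf_strictMonoOn : StrictMonoOn (xf n) (Ici b)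
  Sf_strictMonoOn : StrictMonoOn (Sf n) (Ici b)
  xf_continuousOn : ContinuousOn (xf n) (Ici b)
  Sf_continuousOn : ContinuousOn (Sf n) (Ici b)

lemma isLastZero_one : IsLastZero 1 0 where
  Sf_ne_zero _ h₁ h₂ := absurd h₂ (not_lt.2 h₁)
  Sf_eq_zero := rfl
  Sf_pos t ht i h₁ h₂ := by rwa [le_antisymm h₂ h₁, Sf_one]
  xf_strictMonoOn := strictMono_id.strictMonoOn _
  Sf_strictMonoOn := strictMono_id.strictMonoOn _
  xf_continuousOn := continuousOn_id
  Sf_continuousOn := continuousOn_id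

namespace IsLastZero

variable {n : ℕ} {b : ℝ}

lemma le_of_Sf_eq_zero (h : IsLastZero n b) (hn : 1 ≤ n) {t : ℝ} (ht : Sf n t = 0) : t ≤ b :=
  not_lt.1 fun hbt => (h.Sf_pos t hbt n hn le_rfl).ne' ht

lemma unique {b' : ℝ} (h : IsLastZero n b) (h' : IsLastZero n b') (hn : 1 ≤ n) : b = b' :=
  le_antisymm (h'.le_of_Sf_eq_zero hn h.Sf_eq_zero) (h.le_of_Sf_eq_zero hn h'.Sf_eq_zero)

lemma isGreatest_Qset (h : IsLastZero n b) (hn : 1 ≤ n) (hb : 0 < b) :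
    IsGreatest (Qset n) b :=
  ⟨⟨hb, h.Sf_ne_zero, h.Sf_eq_zero⟩, fun _ ht => h.le_of_Sf_eq_zero hn ht.2.2⟩

section Succ

variable (h : IsLastZero (n + 1) b)
include h

lemma Sf_pos_of_lt {t : ℝ} (ht : b < t) : 0 < Sf (n + 1) t :=
  h.Sf_pos t ht (n + 1) (Nat.le_add_left 1 n) le_rfl

lemma xf_succ_strictMonoOn : StrictMonoOn (xf (n + 2)) (Ioi b) :=
  (h.xf_strictMonoOn.mono Ioi_subset_Ici_self).sub_one_div
    (h.Sf_strictMonoOn.mono Ioi_subset_Ici_self).monotoneOn fun _ => h.Sf_pos_of_lt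

lemma Sf_succ_strictMonoOn : StrictMonoOn (Sf (n + 2)) (Ioi b) :=
  (h.Sf_strictMonoOn.mono Ioi_subset_Ici_self).add_monotone
    h.xf_succ_strictMonoOn.monotoneOn

lemma xf_succ_continuousOn : ContinuousOn (xf (n + 2)) (Ioi b) :=
  (h.xf_continuousOn.mono Ioi_subset_Ici_self).sub <| continuousOn_const.div
    (h.Sf_continuousOn.mono Ioi_subset_Ici_self) fun _ ht => (h.Sf_pos_of_lt ht).ne'

lemma Sf_succ_continuousOn : ContinuousOn (Sf (n + 2)) (Ioi b) :=
  (h.Sf_continuousOn.mono Ioi_subset_Ici_self).add h.xf_succ_continuousOn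

/-- `S_{n+1} → 0⁺` at `b⁺`, so the term `-1/S_{n+1}` of
`S_{n+2} = S_{n+1} + x_{n+1} - 1/S_{n+1}` blows up. -/
lemma tendsto_Sf_succ_atBot : Tendsto (Sf (n + 2)) (𝓝[>] b) atBot := by
  have hcont : ∀ f : ℝ → ℝ, ContinuousOn f (Ici b) → Tendsto f (𝓝[>] b) (𝓝 (f b)) :=
    fun f hf => ((hf b self_mem_Ici).mono Ioi_subset_Ici_self).tendsto
  have hS : Tendsto (Sf (n + 1)) (𝓝[>] b) (𝓝[>] 0) := by
    refine tendsto_nhdsWithin_iff.2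
      ⟨?_, eventually_nhdsWithin_of_forall fun _ => h.Sf_pos_of_lt⟩
    simpa only [h.Sf_eq_zero] using hcont _ h.Sf_continuousOn
  have hsum := (hcont _ h.Sf_continuousOn).add (hcont _ h.xf_continuousOn)
  refine (hsum.sub_one_div_atBot hS).congr fun t => ?_
  rw [Sf_add_two, xf_add_two]
  ring

lemma succ {b' : ℝ} (hbb' : b < b') (hb' : Sf (n + 2) b' = 0) : IsLastZero (n + 2) b' where
  Sf_ne_zero i h₁ h₂ := (h.Sf_pos b' hbb' i h₁ (by omega)).ne'
  Sf_eq_zero := hb'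
  Sf_pos t ht i h₁ h₂ := by
    rcases h₂.lt_or_eq with h₂ | rfl
    · exact h.Sf_pos t (hbb'.trans ht) i h₁ (by omega)
    · simpa only [hb'] using
        h.Sf_succ_strictMonoOn hbb' (hbb'.trans ht : b < t) ht
  xf_strictMonoOn := h.xf_succ_strictMonoOn.mono (Ici_subset_Ioi.2 hbb')
  Sf_strictMonoOn := h.Sf_succ_strictMonoOn.mono (Ici_subset_Ioi.2 hbb')
  xf_continuousOn := h.xf_succ_continuousOn.mono (Ici_subset_Ioi.2 hbb')
  Sf_continuousOn := h.Sf_succ_continuousOn.mono (Ici_subset_Ioi.2 hbb')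

lemma exists_succ : ∃ b', b < b' ∧ IsLastZero (n + 2) b' := by
  set c : ℝ := max (b + 1) (n + 2)
  have hbc : b < c := (lt_add_one b).trans_le (le_max_left _ _)
  have hc : 0 < Sf (n + 2) c := by
    have hnc : ((n + 1 : ℕ) : ℝ) + 1 ≤ c := by
      push_cast; linarith [le_max_right (b + 1) (n + 2 : ℝ)]
    linarith [(sub_le_xf_and_one_le_Sf (n + 1) hnc).2]
  obtain ⟨b', hb', hb'0⟩ := exists_mem_Ioo_eq_zero_of_tendsto_atBot
    h.Sf_succ_continuousOn h.tendsto_Sf_succ_atBot hbc hc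
  exact ⟨b', hb'.1, h.succ hb'.1 hb'0⟩

end Succ

end IsLastZero

lemma exists_isLastZero (n : ℕ) : ∃ b, IsLastZero (n + 1) b := by
  induction n with
  | zero => exact ⟨0, isLastZero_one⟩
  | succ n ih =>
    obtain ⟨b, hb⟩ := ih
    obtain ⟨b', -, hb'⟩ := hb.exists_succ
    exact ⟨b', hb'⟩

lemma exists_strictMonoOn_isLastZero :
    ∃ b : ℕ → ℝ, StrictMonoOn b (Ici 1) ∧ ∀ n, 1 ≤ n → IsLastZero n (b n) := by
  choose c hc using exists_isLastZero
  have hmono : StrictMono c := strictMono_nat_of_lt_succ fun n => by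
    obtain ⟨b', hlt, hb'⟩ := (hc n).exists_succ
    rwa [(hc (n + 1)).unique hb' (Nat.le_add_left 1 _)]
  refine ⟨fun n => c (n - 1), fun m hm k hk hmk => hmono (by rw [Set.mem_Ici] at hm hk; omega), fun n hn => ?_⟩
  have := hc (n - 1)
  rwa [Nat.sub_add_cancel hn] at this

/-- For every `n ≥ 2`, `Q_n` has a greatest element `b_n` (in particular it is nonempty);
the sequence `(b_n)_{n ≥ 2}` is strictly increasing; for every `t > b_n` all the partial sums
`S_i(t)` (for `1 ≤ i ≤ n`) are positive; and `t ↦ S_n(t)` is strictly increasing and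
continuous on `(b_n, ∞)`. -/
theorem Qset_isGreatest_and_properties :
    ∃ b : ℕ → ℝ,
      (∀ n, 2 ≤ n → IsGreatest (Qset n) (b n)) ∧
      StrictMonoOn b (Set.Ici 2) ∧
      (∀ n, 2 ≤ n → ∀ t, b n < t → ∀ i, 1 ≤ i → i ≤ n → 0 < Sf i t) ∧
      (∀ n, 2 ≤ n →
        StrictMonoOn (Sf n) (Set.Ioi (b n)) ∧ ContinuousOn (Sf n) (Set.Ioi (b n))) := by
  obtain ⟨b, hmono, hb⟩ := exists_strictMonoOn_isLastZero
  have hb₁ : b 1 = 0 := (hb 1 le_rfl).Sf_eq_zero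
  have hpos : ∀ n, 2 ≤ n → 0 < b n := fun n hn =>
    hb₁ ▸ hmono (mem_Ici.2 le_rfl) (mem_Ici.2 (by omega)) (by omega)
  refine ⟨b, fun n hn => (hb n (by omega)).isGreatest_Qset (by omega) (hpos n hn),
    hmono.mono (Ici_subset_Ici.2 (by norm_num)), fun n hn => (hb n (by omega)).Sf_pos,
    fun n hn => ⟨?_, ?_⟩⟩
  · exact (hb n (by omega)).Sf_strictMonoOn.mono Ioi_subset_Ici_self
  · exact (hb n (by omega)).Sf_continuousOn.mono Ioi_subset_Ici_self
end

section
/- For every n ≥ 2, the greatest element a_n of the set {t > 0 : S_i(t) ≠ 0 for all 1 ≤ i < n, and x_n(t) = 0} is strictly larger than the greatest element b_n of the set {t > 0 : S_i(t) ≠ 0 for all 1 ≤ i < n, and S_n(t) = 0}; that is, a_n > b_n. -/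
open Finset Set Filter Topology

/-! Let `c` be the last parameter at which `S_1, …, S_n, x_n` fail to be all positive: it
exists because all of them are positive for `t ≥ n` and their common positivity region is
open. Coming from the right, no `S_i` with `i < n` can tend to `0` at `c`, for then
`S_{i+1} = S_i + x_i - 1/S_i → -∞`; so `S_1(c), …, S_{n-1}(c) > 0`, and `x_n(c) = 0` by the
choice of `c`. Thus `c ∈ R_n`, while `S_n(c) = S_{n-1}(c) > 0` and `S_n ≠ 0` beyond `c`
place every point of `Q_n` strictly below `c`. -/

open Filter Topology

lemma xf_succ (i : ℕ) (t : ℝ) : xf (i + 2) t = xf (i + 1) t - 1 / Sf (i + 1) t := rfl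

lemma Sf_succ (i : ℕ) (t : ℝ) : Sf (i + 2) t = Sf (i + 1) t + xf (i + 2) t := rfl

lemma sub_le_xf_and_le_Sf (t : ℝ) :
    ∀ i : ℕ, (i : ℝ) + 1 ≤ t → t - i ≤ xf (i + 1) t ∧ t ≤ Sf (i + 1) t
  | 0, _ => ⟨by simp [xf, XS], le_rfl⟩
  | i + 1, ht => by
    push_cast at ht
    obtain ⟨hx, hS⟩ := sub_le_xf_and_le_Sf t i (by linarith)
    have hinv : 1 / Sf (i + 1) t ≤ 1 := by
      rw [div_le_one (by linarith)]; linarith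
    have hx' : t - (i + 1 : ℕ) ≤ xf (i + 2) t := by
      rw [xf_succ]; push_cast; linarith
    exact ⟨hx', by rw [Sf_succ]; push_cast at hx'; linarith⟩

lemma continuousAt_XS {c : ℝ} :
    ∀ {i : ℕ}, (∀ j, 1 ≤ j → j < i → Sf j c ≠ 0) → ContinuousAt (fun t => XS t i) c
  | 0, _ => continuousAt_const
  | 1, _ => (continuous_id.prodMk continuous_id).continuousAt
  | i + 2, h => by
    have ih : ContinuousAt (fun t => XS t (i + 1)) c :=
      continuousAt_XS fun j hj hji => h j hj (by omega)
    have hx : ContinuousAt (fun t => (XS t (i + 1)).1 - 1 / (XS t (i + 1)).2) c :=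
      ih.fst.sub (continuousAt_const.div ih.snd (h (i + 1) (by omega) (by omega)))
    exact hx.prodMk (ih.snd.add hx)

lemma continuousAt_xf {c : ℝ} {i : ℕ} (h : ∀ j, 1 ≤ j → j < i → Sf j c ≠ 0) :
    ContinuousAt (xf i) c :=
  (continuousAt_XS h).fst

lemma continuousAt_Sf {c : ℝ} {i : ℕ} (h : ∀ j, 1 ≤ j → j < i → Sf j c ≠ 0) :
    ContinuousAt (Sf i) c :=
  (continuousAt_XS h).snd

lemma Sf_pos_of_eventually_pos {c : ℝ} {i : ℕ} (hc : ∀ j, 1 ≤ j → j ≤ i → Sf j c ≠ 0)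
    (hpos : ∀ᶠ t in 𝓝[>] c, 0 < Sf (i + 1) t ∧ 0 < Sf (i + 2) t) : 0 < Sf (i + 1) c := by
  have hS : ContinuousAt (Sf (i + 1)) c := continuousAt_Sf fun j hj hji => hc j hj (by omega)
  have hx : ContinuousAt (xf (i + 1)) c := continuousAt_xf fun j hj hji => hc j hj (by omega)
  have hS0 : 0 ≤ Sf (i + 1) c :=
    ge_of_tendsto (hS.mono_left nhdsWithin_le_nhds) (hpos.mono fun _ h => h.1.le)
  refine hS0.lt_of_ne fun hzero => ?_
  -- `S_{i+2} = S_{i+1} + x_{i+1} - 1/S_{i+1}` would tend to `-∞` as `S_{i+1} → 0⁺`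
  have hS_right : Tendsto (Sf (i + 1)) (𝓝[>] c) (𝓝[>] 0) :=
    tendsto_nhdsWithin_iff.mpr
      ⟨hzero ▸ hS.mono_left nhdsWithin_le_nhds, hpos.mono fun _ h => h.1⟩
  have hinv : Tendsto (fun t => 1 / Sf (i + 1) t) (𝓝[>] c) atTop := by
    simpa only [one_div, Function.comp_def] using tendsto_inv_nhdsGT_zero.comp hS_right
  have hbot : Tendsto (Sf (i + 2)) (𝓝[>] c) atBot := by
    have hsum := ((hS.add hx).mono_left nhdsWithin_le_nhds).add_atBot
      (tendsto_neg_atTop_atBot.comp hinv)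
    refine hsum.congr fun t => ?_
    simp only [Function.comp_apply, Pi.add_apply, Sf_succ, xf_succ]
    ring
  obtain ⟨t, ht, hneg⟩ := (hpos.and (hbot.eventually (eventually_lt_atBot 0))).exists
  exact hneg.not_gt ht.2

def PositiveUpTo (n : ℕ) (t : ℝ) : Prop :=
  (∀ i ∈ Finset.Icc 1 n, 0 < Sf i t) ∧ 0 < xf n t

lemma positiveUpTo_of_le {n : ℕ} {t : ℝ} (hn : 1 ≤ n) (ht : (n : ℝ) ≤ t) :
    PositiveUpTo n t := by
  obtain ⟨m, rfl⟩ : ∃ m, n = m + 1 := ⟨n - 1, by omega⟩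
  push_cast at ht
  refine ⟨fun i hi => ?_, ?_⟩
  · rw [Finset.mem_Icc] at hi
    obtain ⟨j, rfl⟩ : ∃ j, i = j + 1 := ⟨i - 1, by omega⟩
    have hj : (j : ℝ) ≤ m := by exact_mod_cast (by omega : j ≤ m)
    linarith [(sub_le_xf_and_le_Sf t j (by linarith)).2]
  · linarith [(sub_le_xf_and_le_Sf t m (by linarith)).1]

lemma isOpen_setOf_positiveUpTo (n : ℕ) : IsOpen {t | PositiveUpTo n t} := by
  refine isOpen_iff_mem_nhds.mpr fun c ⟨hS, hx⟩ => ?_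
  have hne : ∀ j, 1 ≤ j → j < n → Sf j c ≠ 0 :=
    fun j hj hjn => (hS j (Finset.mem_Icc.mpr ⟨hj, hjn.le⟩)).ne'
  refine Filter.Eventually.and ?_ ?_
  · refine (Finset.eventually_all _).mpr fun i hi => ?_
    have hi' := Finset.mem_Icc.mp hi
    exact (continuousAt_Sf fun j hj hji => hne j hj (by omega)).eventually
      (eventually_gt_nhds (hS i hi))
  · exact (continuousAt_xf hne).eventually (eventually_gt_nhds hx)

lemma mem_Rset_of_not_positiveUpTo_of_forall_gt {n : ℕ} {c : ℝ} (hn : 2 ≤ n) (hc : 0 < c)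
    (hbad : ¬ PositiveUpTo n c) (hgood : ∀ t, c < t → PositiveUpTo n t) :
    c ∈ Rset n ∧ 0 < Sf n c := by
  have hright : ∀ᶠ t in 𝓝[>] c, PositiveUpTo n t := eventually_nhdsWithin_of_forall hgood
  have hS : ∀ i, 1 ≤ i → i < n → 0 < Sf i c := by
    intro i
    induction i using Nat.strong_induction_on with
    | _ i ih =>
      intro hi hin
      obtain ⟨j, rfl⟩ : ∃ j, i = j + 1 := ⟨i - 1, by omega⟩
      refine Sf_pos_of_eventually_pos (fun k hk hkj => (ih k (by omega) hk (by omega)).ne') ?_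
      refine hright.mono fun t ht => ⟨ht.1 _ ?_, ht.1 _ ?_⟩ <;> simp only [Finset.mem_Icc] <;> omega
  obtain ⟨m, rfl⟩ : ∃ m, n = m + 2 := ⟨n - 2, by omega⟩
  have hne : ∀ i, 1 ≤ i → i < m + 2 → Sf i c ≠ 0 := fun i hi hin => (hS i hi hin).ne'
  have hx0 : 0 ≤ xf (m + 2) c :=
    ge_of_tendsto ((continuousAt_xf hne).mono_left nhdsWithin_le_nhds)
      (hright.mono fun _ h => h.2.le)
  have hSm : 0 < Sf (m + 1) c := hS (m + 1) (by omega) (by omega)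
  have hx : xf (m + 2) c = 0 := by
    refine le_antisymm (not_lt.mp fun hxpos => hbad ⟨fun i hi => ?_, hxpos⟩) hx0
    obtain ⟨hi1, hi2⟩ := Finset.mem_Icc.mp hi
    rcases hi2.lt_or_eq with hlt | rfl
    · exact hS i hi1 hlt
    · rw [Sf_succ]; linarith
  exact ⟨⟨hc, hne, hx⟩, by rw [Sf_succ, hx, add_zero]; exact hSm⟩

lemma exists_mem_Rset_gt_of_mem_Qset {n : ℕ} {b : ℝ} (hn : 2 ≤ n) (hb : b ∈ Qset n) :
    ∃ c ∈ Rset n, b < c := by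
  obtain ⟨hb0, -, hbn⟩ := hb
  set B := {t | ¬ PositiveUpTo n t}
  have hbB : b ∈ B := fun h => (h.1 n (Finset.mem_Icc.mpr ⟨by omega, le_rfl⟩)).ne' hbn
  have hBdd : BddAbove B := ⟨n, fun t ht => not_lt.mp fun hnt =>
    ht (positiveUpTo_of_le (by omega) hnt.le)⟩
  set c := sSup B
  have hbc : b ≤ c := le_csSup hBdd hbB
  have hcB : c ∈ B :=
    (isOpen_setOf_positiveUpTo n).isClosed_compl.csSup_mem ⟨b, hbB⟩ hBdd
  obtain ⟨hcR, hSc⟩ := mem_Rset_of_not_positiveUpTo_of_forall_gt hn (hb0.trans_le hbc) hcB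
    fun t hct => not_not.mp (notMem_of_csSup_lt hct hBdd)
  refine ⟨c, hcR, hbc.lt_of_ne ?_⟩
  rintro rfl
  exact hSc.ne' hbn

/-- For every `n ≥ 2`, the greatest element `a_n` of `R_n` is strictly larger than the
greatest element `b_n` of `Q_n`. -/
theorem greatest_Rset_gt_greatest_Qset (n : ℕ) (hn : 2 ≤ n) (a b : ℝ)
    (ha : IsGreatest (Rset n) a) (hb : IsGreatest (Qset n) b) :
    b < a := by
  obtain ⟨c, hcR, hbc⟩ := exists_mem_Rset_gt_of_mem_Qset hn hb.1
  exact hbc.trans_le (ha.2 hcR)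
end

section
/- For every N ≥ 3, the unique strictly decreasing zero-mean solution of the recursion satisfies S_{N,n} ≥ x_{N,1} for all n = 1, …, N−1, and consequently 0 < x_{N,n} − x_{N,n+1} ≤ 1/x_{N,1} for all n = 1, …, N−1. -/
open Finset

/-- Partial sum `S_n = x_1 + ... + x_n`. -/
noncomputable def S (x : ℕ → ℝ) (n : ℕ) : ℝ := ∑ i ∈ Finset.Icc 1 n, x i

/-- `x_1, ..., x_N` is a solution of the recursion `x_{n+1} = x_n - 1/S_n`
with all relevant partial sums nonzero. -/
def IsSolution (N : ℕ) (x : ℕ → ℝ) : Prop :=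
  ∀ n, 1 ≤ n → n ≤ N - 1 → S x n ≠ 0 ∧ x (n + 1) = x n - 1 / S x n

/-- Zero-median property: the middle value is `0` when `N` is odd, and the two middle
values are negatives of each other when `N` is even. -/
def ZeroMedian (N : ℕ) (x : ℕ → ℝ) : Prop :=
  (Odd N → x ((N + 1) / 2) = 0) ∧ (Even N → x (N / 2) = - x (N / 2 + 1))

/-!
The recursion says `x_n - x_{n+1} = 1 / S_n`, so the gap bounds follow from
`x_1 ≤ S_n`. Since the terms decrease, `n ↦ S_n` is concave, hence on `[1, N-1]` it is at
least `min (S_1, S_{N-1}) = min (x_1, -x_N)`, and it remains to show `x_1 + x_N ≤ 0`.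
If instead `x_1 + x_N > 0`, comparing the sequence with its reflection `n ↦ N + 1 - n`
shows inductively that `S_{N-n} < S_n` and `x_n + x_{N+1-n} > 0` for all `n ≤ N - 1`;
for `n = N - 1` this reads `x_1 < -x_N`, a contradiction.
-/

section PartialSums

variable {x : ℕ → ℝ}

lemma S_succ (x : ℕ → ℝ) (n : ℕ) : S x (n + 1) = S x n + x (n + 1) :=
  sum_Icc_succ_top (by omega) x

lemma S_one (x : ℕ → ℝ) : S x 1 = x 1 := by
  simp [S]

lemma S_pred_eq_neg_of_S_eq_zero {N : ℕ} (hN : 1 ≤ N) (h : S x N = 0) :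
    S x (N - 1) = -x N := by
  have := S_succ x (N - 1)
  rw [Nat.sub_add_cancel hN] at this
  linarith

lemma monotoneOn_S {a b : ℕ} (hx : ∀ i ∈ Set.Icc (a + 1) b, 0 ≤ x i) :
    MonotoneOn (S x) (Set.Icc a b) :=
  monotoneOn_of_le_succ Set.ordConnected_Icc fun k _ ⟨hak, _⟩ ⟨_, hkb⟩ => by
    rw [Order.succ_eq_add_one, S_succ]
    linarith [hx (k + 1) ⟨by omega, hkb⟩]

lemma antitoneOn_S {a b : ℕ} (hx : ∀ i ∈ Set.Icc (a + 1) b, x i ≤ 0) :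
    AntitoneOn (S x) (Set.Icc a b) :=
  antitoneOn_of_succ_le Set.ordConnected_Icc fun k _ ⟨hak, _⟩ ⟨_, hkb⟩ => by
    rw [Order.succ_eq_add_one, S_succ]
    linarith [hx (k + 1) ⟨by omega, hkb⟩]

lemma min_le_S_of_antitoneOn {a b n : ℕ} (hx : AntitoneOn x (Set.Icc (a + 1) b))
    (han : a ≤ n) (hnb : n ≤ b) : min (S x a) (S x b) ≤ S x n := by
  obtain rfl | han' := han.eq_or_lt
  · exact min_le_left _ _
  have hn : n ∈ Set.Icc (a + 1) b := ⟨han', hnb⟩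
  rcases le_or_gt 0 (x n) with hxn | hxn
  · have hS : MonotoneOn (S x) (Set.Icc a n) :=
      monotoneOn_S fun i ⟨hai, hin⟩ => hxn.trans (hx ⟨hai, by omega⟩ hn hin)
    exact (min_le_left _ _).trans (hS ⟨le_rfl, han⟩ ⟨han, le_rfl⟩ han)
  · have hS : AntitoneOn (S x) (Set.Icc n b) :=
      antitoneOn_S fun i ⟨hni, hib⟩ => (hx hn ⟨by omega, hib⟩ (by omega)).trans hxn.le
    exact (min_le_right _ _).trans (hS ⟨le_rfl, hnb⟩ ⟨hnb, le_rfl⟩ hnb)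

end PartialSums

namespace IsSolution

variable {N : ℕ} {x : ℕ → ℝ}

lemma sub_succ_eq (hsol : IsSolution N x) {n : ℕ} (hn1 : 1 ≤ n) (hnN : n ≤ N - 1) :
    x n - x (n + 1) = 1 / S x n := by
  rw [(hsol n hn1 hnN).2]
  ring

lemma S_pos (hsol : IsSolution N x) {n : ℕ} (hn1 : 1 ≤ n) (hnN : n ≤ N - 1)
    (hlt : x (n + 1) < x n) : 0 < S x n := by
  have := hsol.sub_succ_eq hn1 hnN
  exact one_div_pos.mp (by linarith)

lemma reflection_lt (hsol : IsSolution N x) (hpos : ∀ n, 1 ≤ n → n ≤ N - 1 → 0 < S x n)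
    (hSN : S x N = 0) (h : 0 < x 1 + x N) :
    ∀ n, 1 ≤ n → n ≤ N - 1 → S x (N - n) < S x n ∧ 0 < x n + x (N - n + 1) := by
  intro n hn1
  induction n, hn1 using Nat.le_induction with
  | base =>
    intro hN1
    rw [S_pred_eq_neg_of_S_eq_zero (by omega) hSN, S_one, Nat.sub_add_cancel (by omega)]
    constructor <;> linarith
  | succ n hn1 ih =>
    intro hnN
    obtain ⟨hS, hsum⟩ := ih (by omega)
    have hSn := hpos n hn1 (by omega)
    have hSm := hpos (N - n) (by omega) (by omega)
    have hrecip : 1 / S x n < 1 / S x (N - n) := one_div_lt_one_div_of_lt hSm hS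
    have hgap := hsol.sub_succ_eq hn1 (by omega)
    have hgap' := hsol.sub_succ_eq (n := N - n) (by omega) (by omega)
    -- `x_{n+1} + x_{N-n} = (x_n + x_{N+1-n}) + (1 / S_{N-n} - 1 / S_n)`
    have hsum' : 0 < x (n + 1) + x (N - n) := by linarith
    have hm : N - (n + 1) + 1 = N - n := by omega
    have hSm' := S_succ x (N - (n + 1))
    rw [hm] at hSm' ⊢
    constructor <;> linarith [S_succ x n]

lemma first_add_last_nonpos (hsol : IsSolution N x) (hN2 : 2 ≤ N)
    (hpos : ∀ n, 1 ≤ n → n ≤ N - 1 → 0 < S x n) (hSN : S x N = 0) : x 1 + x N ≤ 0 := by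
  by_contra! h
  have := (hsol.reflection_lt hpos hSN h (N - 1) (by omega) le_rfl).1
  rw [Nat.sub_sub_self (by omega), S_one, S_pred_eq_neg_of_S_eq_zero (by omega) hSN] at this
  linarith

end IsSolution

/-- For the unique strictly decreasing zero-mean solution of the recursion,
`S_{N,n} ≥ x_{N,1}` and `0 < x_{N,n} - x_{N,n+1} ≤ 1 / x_{N,1}` for `n = 1, ..., N-1`. -/
theorem partial_sum_and_gap_bounds (N : ℕ) (hN : 3 ≤ N) (x : ℕ → ℝ)
    (hsol : IsSolution N x) (hdec : ∀ n, 1 ≤ n → n < N → x (n + 1) < x n)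
    (hmean : ∑ i ∈ Finset.Icc 1 N, x i = 0) :
    ∀ n, 1 ≤ n → n ≤ N - 1 →
      x 1 ≤ S x n ∧ 0 < x n - x (n + 1) ∧ x n - x (n + 1) ≤ 1 / x 1 := by
  intro n hn1 hnN
  have hpos : ∀ k, 1 ≤ k → k ≤ N - 1 → 0 < S x k := fun k hk1 hkN =>
    hsol.S_pos hk1 hkN (hdec k hk1 (by omega))
  have hx1 : 0 < x 1 := S_one x ▸ hpos 1 le_rfl (by omega)
  have hanti : AntitoneOn x (Set.Icc 2 (N - 1)) :=
    antitoneOn_of_succ_le Set.ordConnected_Icc fun k _ ⟨hk2, hkN⟩ _ =>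
      (hdec k (by omega) (by omega)).le
  have hfirst_last := hsol.first_add_last_nonpos (by omega) hpos hmean
  have hS : x 1 ≤ S x n := by
    have := min_le_S_of_antitoneOn hanti hn1 hnN
    rwa [S_one, S_pred_eq_neg_of_S_eq_zero (by omega) hmean, min_eq_left (by linarith)] at this
  have hgap := hsol.sub_succ_eq hn1 hnN
  exact ⟨hS, hgap ▸ one_div_pos.mpr (hpos n hn1 hnN), hgap ▸ one_div_le_one_div_of_le hx1 hS⟩
end
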